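/- arXiv:1310.1585 — 2 statements merged into one kernel-verified Lean document; each statement's English description precedes it below -/
import Mathlib

section
/- Let q ≥ 3 be an integer and let v_1, …, v_n be points of ℝ∞ (n ≥ 1). Then there exist integers b_1, …, b_n such that v_1, …, v_n are the consecutive convergents of the Rosen continued fraction [b_1, …, b_n]_q if and only if ⟨∞, v_1, …, v_n⟩ is a path in the Farey graph 𝓕_q. Moreover, in that case the integers b_1, …, b_n are uniquely determined by v_1, …, v_n. -/
/-!
A Rosen continued fraction [b₁, …, bₘ] is the image of `∞` under `T_{b₁} ⋯ T_{bₘ}`, where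
`T_b = τ^b σ ∈ G_q` sends the edge `{0, ∞}` to `{∞, bλ}`. Hence consecutive convergents are
adjacent, and both the converse and the uniqueness reduce to the fact that the neighbours of `∞`
are exactly the points `bλ`, i.e. that the stabiliser of `∞` in `G_q` is generated by `τ`.

That is a ping-pong argument for `σ` and `ρ = τσ`, which has order `q`: `σ` maps the positive
reals to the negative ones and `ρ^a`, `0 < a < q`, maps the negative reals to the positive ones.
Following the image of `∞` along a reduced word in `σ` and the `ρ^a` shows that only the words
spelling a power of `τ` fix `∞`. The powers of `ρ` are read off from the matrix `[[λ, -1], [1, 0]]`,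
whose powers have entries `U_n(cos (π / q))` (Chebyshev polynomials of the second kind).
-/

open OnePoint

noncomputable def lamq (q : ℕ) : ℝ := 2 * Real.cos (Real.pi / q)

abbrev RInf : Type := OnePoint ℝ

noncomputable def sigmaFun : RInf → RInf := fun z =>
  match z with
  | Option.none => ((0 : ℝ) : RInf)
  | Option.some x => if x = 0 then (∞ : RInf) else ((-x⁻¹ : ℝ) : RInf)

lemma sigmaFun_invol (z : RInf) : sigmaFun (sigmaFun z) = z := by
  cases z with
  | none => simp [sigmaFun, OnePoint.infty] <;> rfl
  | some x =>
    by_cases h : x = 0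
    · simp only [sigmaFun, h, if_true, if_pos]
      rfl
    · simp only [sigmaFun, h, if_false]
      have h1 : (-x⁻¹ : ℝ) ≠ 0 := by simpa using h
      simp only [h1, if_false]
      have h2 : (-(-x⁻¹)⁻¹ : ℝ) = x := by
        rw [inv_neg, inv_inv, neg_neg]
      rw [h2]
      rfl

noncomputable def sigmaP : Equiv.Perm RInf :=
  ⟨sigmaFun, sigmaFun, sigmaFun_invol, sigmaFun_invol⟩

noncomputable def tauP (q : ℕ) : Equiv.Perm RInf where
  toFun z := match z with
    | Option.none => (∞ : RInf)
    | Option.some x => Option.some (x + lamq q)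
  invFun z := match z with
    | Option.none => (∞ : RInf)
    | Option.some x => Option.some (x - lamq q)
  left_inv z := by cases z <;> simp [OnePoint.infty] <;> rfl
  right_inv z := by cases z <;> simp [OnePoint.infty] <;> rfl

noncomputable def Gq (q : ℕ) : Subgroup (Equiv.Perm RInf) :=
  Subgroup.closure {sigmaP, tauP q}

def FareyVertex (q : ℕ) (v : RInf) : Prop := ∃ g ∈ Gq q, g ∞ = v

def FareyAdj (q : ℕ) (u v : RInf) : Prop :=
  u ≠ v ∧ ∃ g ∈ Gq q,
    ((g ((0:ℝ) : RInf) = u ∧ g ∞ = v) ∨ (g ((0:ℝ) : RInf) = v ∧ g ∞ = u))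

noncomputable def rhoP (q : ℕ) : Equiv.Perm RInf := tauP q * sigmaP

def V0 (q : ℕ) : Set RInf := {v | ∃ i : ℕ, i < q ∧ (rhoP q ^ i) ∞ = v}

def IsFace (q : ℕ) (P : Set RInf) : Prop := ∃ g ∈ Gq q, P = ⇑g '' V0 q

/-- `y` lies in the connected component of `ℝ∞ \ {u, v}` that does not contain `x`. -/
def SepSide (u v x y : RInf) : Prop :=
  y ∈ ({u, v}ᶜ : Set RInf) ∧ x ∉ connectedComponentIn ({u, v}ᶜ : Set RInf) y

noncomputable def Tq (q : ℕ) (b : ℤ) : RInf → RInf := fun z =>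
  match z with
  | Option.none => ((b * lamq q : ℝ) : RInf)
  | Option.some x => if x = 0 then (∞ : RInf) else ((b * lamq q - x⁻¹ : ℝ) : RInf)

noncomputable def RosenValue (q : ℕ) (bs : List ℤ) : RInf := bs.foldr (Tq q) ∞

def IsGeodesicRosen (q : ℕ) (bs : List ℤ) : Prop :=
  bs ≠ [] ∧ RosenValue q bs ≠ ∞ ∧
  ∀ cs : List ℤ, cs ≠ [] → RosenValue q cs = RosenValue q bs → bs.length ≤ cs.length

def IsPathFrom (q : ℕ) (p : List RInf) (x y : RInf) : Prop :=
  p.Chain' (FareyAdj q) ∧ p.head? = Option.some x ∧ p.getLast? = Option.some y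

def IsGeodesicPath (q : ℕ) (p : List RInf) (x y : RInf) : Prop :=
  IsPathFrom q p x y ∧ ∀ p' : List RInf, IsPathFrom q p' x y → p.length ≤ p'.length

/-- `{u, v}` is a pair of `y`-parents of `x`. -/
def IsParentPair (q : ℕ) (y x u v : RInf) : Prop :=
  ∃ g ∈ Gq q, ∃ i : ℤ,
    g ((rhoP q ^ i) ∞) = x ∧
    ({u, v} : Set RInf) = {g ((rhoP q ^ (i-1)) ∞), g ((rhoP q ^ (i+1)) ∞)} ∧
    SepSide u v x y

/-- `P 0, …, P (n-1)` is the q-chain from `x` to `y`. -/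
def IsQChain (q : ℕ) (x y : RInf) (n : ℕ) (P : ℕ → Set RInf) : Prop :=
  1 ≤ n ∧ (∀ j < n, IsFace q (P j)) ∧
  (∃ g ∈ Gq q, ∃ i : ℤ,
      g ((rhoP q ^ i) ∞) = x ∧ P 0 = ⇑g '' V0 q ∧
      SepSide (g ((rhoP q ^ (i-1)) ∞)) (g ((rhoP q ^ (i+1)) ∞)) x y) ∧
  y ∈ P (n-1) ∧ (∀ j, j < n - 1 → y ∉ P j) ∧
  (∀ j, j + 1 < n → ∃ a b : RInf, FareyAdj q a b ∧ a ∈ P j ∧ b ∈ P j ∧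
      (y ∈ ({a, b}ᶜ : Set RInf) ∧
        ∀ w ∈ P j, w ∉ connectedComponentIn ({a, b}ᶜ : Set RInf) y) ∧
      P (j+1) ≠ P j ∧ a ∈ P (j+1) ∧ b ∈ P (j+1))

/-- Fibonacci numbers with `F 0 = 1`, `F 1 = 2`. -/
def fibF : ℕ → ℕ
  | 0 => 1
  | 1 => 2
  | (n+2) => fibF (n+1) + fibF n

open Real Set

@[simp] lemma sigmaP_infty : sigmaP ∞ = ((0 : ℝ) : RInf) := rfl

@[simp] lemma sigmaP_zero : sigmaP ((0 : ℝ) : RInf) = ∞ := by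
  simp [sigmaP, sigmaFun]

lemma sigmaP_coe {x : ℝ} (hx : x ≠ 0) : sigmaP (x : RInf) = ((-x⁻¹ : ℝ) : RInf) := by
  simp [sigmaP, sigmaFun, hx]

@[simp] lemma tauP_infty (q : ℕ) : tauP q ∞ = ∞ := rfl

@[simp] lemma tauP_coe (q : ℕ) (x : ℝ) : tauP q (x : RInf) = ((x + lamq q : ℝ) : RInf) := rfl

lemma tauP_inv_coe (q : ℕ) (x : ℝ) : (tauP q)⁻¹ (x : RInf) = ((x - lamq q : ℝ) : RInf) :=
  rfl

lemma tauP_zpow_apply_infty (q : ℕ) (k : ℤ) : (tauP q ^ k) ∞ = ∞ :=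
  Equiv.Perm.zpow_apply_eq_self_of_apply_eq_self (tauP_infty q) k

lemma tauP_zpow_apply_coe (q : ℕ) (k : ℤ) (x : ℝ) :
    (tauP q ^ k) (x : RInf) = ((x + k * lamq q : ℝ) : RInf) := by
  induction k using Int.induction_on generalizing x with
  | zero => simp
  | succ k ih =>
    rw [zpow_add_one, Equiv.Perm.mul_apply, tauP_coe, ih]
    push_cast; ring_nf
  | pred k ih =>
    rw [zpow_sub_one, Equiv.Perm.mul_apply, tauP_inv_coe, ih]
    push_cast; ring_nf

lemma sigmaP_mem (q : ℕ) : sigmaP ∈ Gq q := Subgroup.subset_closure (by simp)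

lemma tauP_mem (q : ℕ) : tauP q ∈ Gq q := Subgroup.subset_closure (by simp)

lemma sigmaP_mul_self : sigmaP * sigmaP = 1 := Equiv.ext sigmaFun_invol

lemma sigmaP_inv : sigmaP⁻¹ = sigmaP := inv_eq_of_mul_eq_one_right sigmaP_mul_self

lemma rhoP_mul_sigmaP (q : ℕ) : rhoP q * sigmaP = tauP q := by
  rw [rhoP, mul_assoc, sigmaP_mul_self, mul_one]

@[simp] lemma rhoP_zero (q : ℕ) : rhoP q ((0 : ℝ) : RInf) = ∞ := by
  simp [rhoP]

lemma lamq_pos {q : ℕ} (hq : 3 ≤ q) : 0 < lamq q := by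
  have hq' : (3 : ℝ) ≤ q := by exact_mod_cast hq
  have h₀ : 0 < π / q := by positivity
  have h₁ : π / q < π / 2 := div_lt_div_of_pos_left pi_pos two_pos (by linarith)
  exact mul_pos two_pos (cos_pos_of_mem_Ioo ⟨by linarith, h₁⟩)

noncomputable def chebU (q : ℕ) (n : ℤ) : ℝ :=
  (Polynomial.Chebyshev.U ℝ n).eval (cos (π / q))

lemma chebU_add_one (q : ℕ) (n : ℤ) :
    chebU q (n + 1) = lamq q * chebU q n - chebU q (n - 1) := by
  simp [chebU, Polynomial.Chebyshev.U_add_one, lamq]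

lemma sin_pi_div_pos {q : ℕ} (hq : 2 ≤ q) : 0 < sin (π / q) := by
  have : (2 : ℝ) ≤ q := by exact_mod_cast hq
  apply sin_pos_of_pos_of_lt_pi (by positivity)
  rw [div_lt_iff₀ (by positivity)]
  nlinarith [pi_pos]

lemma chebU_eq_sin_div {q : ℕ} (hq : 2 ≤ q) (n : ℤ) :
    chebU q n = sin ((n + 1) * (π / q)) / sin (π / q) := by
  rw [← Polynomial.Chebyshev.U_real_cos, chebU, mul_div_cancel_right₀ _ (sin_pi_div_pos hq).ne']

lemma chebU_nonneg {q : ℕ} (hq : 2 ≤ q) {n : ℤ} (h₀ : -1 ≤ n) (h₁ : n + 1 ≤ q) :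
    0 ≤ chebU q n := by
  have hq' : (0 : ℝ) < q := by positivity
  have h₀' : (0 : ℝ) ≤ n + 1 := by exact_mod_cast (by omega : (0 : ℤ) ≤ n + 1)
  have h₁' : (n : ℝ) + 1 ≤ q := by exact_mod_cast h₁
  rw [chebU_eq_sin_div hq]
  refine div_nonneg (sin_nonneg_of_nonneg_of_le_pi (by positivity) ?_) (sin_pi_div_pos hq).le
  calc ((n : ℝ) + 1) * (π / q) ≤ q * (π / q) := by gcongr
    _ = π := by field_simp

lemma chebU_pos {q : ℕ} {n : ℤ} (h₀ : 0 ≤ n) (h₁ : n + 2 ≤ q) : 0 < chebU q n := by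
  have hq : 2 ≤ q := by omega
  have hq' : (0 : ℝ) < q := by positivity
  have h₀' : (0 : ℝ) < n + 1 := by exact_mod_cast (by omega : (0 : ℤ) < n + 1)
  have h₁' : (n : ℝ) + 1 < q := by exact_mod_cast (by omega : n + 1 < q)
  rw [chebU_eq_sin_div hq]
  refine div_pos (sin_pos_of_pos_of_lt_pi (by positivity) ?_) (sin_pi_div_pos hq)
  calc ((n : ℝ) + 1) * (π / q) < q * (π / q) := by gcongr
    _ = π := by field_simp

lemma chebU_sub_one {q : ℕ} (hq : 2 ≤ q) : chebU q (q - 1) = 0 := by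
  have hq' : (q : ℝ) ≠ 0 := by positivity
  rw [chebU_eq_sin_div hq]
  push_cast
  rw [sub_add_cancel, mul_div_cancel₀ _ hq', sin_pi, zero_div]

lemma chebU_self {q : ℕ} (hq : 2 ≤ q) : chebU q q = -1 := by
  have hq' : (q : ℝ) ≠ 0 := by positivity
  rw [chebU_eq_sin_div hq, Int.cast_natCast, add_mul, one_mul, mul_div_cancel₀ _ hq', add_comm,
    sin_add_pi, neg_div, div_self (sin_pi_div_pos hq).ne']

lemma chebU_sub_two {q : ℕ} (hq : 2 ≤ q) : chebU q (q - 2) = 1 := by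
  have hq' : (q : ℝ) ≠ 0 := by positivity
  rw [chebU_eq_sin_div hq]
  push_cast
  rw [show ((q : ℝ) - 2 + 1) * (π / q) = π - π / q by field_simp; ring, sin_pi_sub,
    div_self (sin_pi_div_pos hq).ne']

noncomputable def rhoMatrix (q : ℕ) : GL (Fin 2) ℝ :=
  Matrix.GeneralLinearGroup.mkOfDetNeZero !![lamq q, -1; 1, 0] (by simp [Matrix.det_fin_two])

lemma rhoMatrix_pow (q n : ℕ) :
    ((rhoMatrix q ^ n : GL (Fin 2) ℝ) : Matrix (Fin 2) (Fin 2) ℝ) =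
      !![chebU q n, -chebU q (n - 1); chebU q (n - 1), -chebU q (n - 2)] := by
  induction n with
  | zero =>
    ext i j
    fin_cases i <;> fin_cases j <;> simp [chebU, Polynomial.Chebyshev.U_neg_two]
  | succ n ih =>
    have h₁ := chebU_add_one q n
    have h₂ := chebU_add_one q (n - 1)
    rw [sub_add_cancel, sub_sub, one_add_one_eq_two] at h₂
    rw [pow_succ, Units.val_mul, ih]
    ext i j
    fin_cases i <;> fin_cases j <;>
      simp [rhoMatrix, show (n : ℤ) + 1 - 2 = n - 1 by ring] <;> linarith

lemma rhoMatrix_pow_self {q : ℕ} (hq : 2 ≤ q) : rhoMatrix q ^ q = -1 := by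
  ext i j
  rw [rhoMatrix_pow, chebU_self hq, chebU_sub_one hq, chebU_sub_two hq]
  fin_cases i <;> fin_cases j <;> simp

lemma neg_one_smul_onePoint (z : RInf) : (-1 : GL (Fin 2) ℝ) • z = z := by
  induction z using OnePoint.rec with
  | infty => simp [smul_infty_eq_ite]
  | coe x => simp [smul_some_eq_ite]

lemma rhoP_eq_toPerm (q : ℕ) : rhoP q = MulAction.toPerm (rhoMatrix q) := by
  ext z
  show tauP q (sigmaP z) = rhoMatrix q • z
  induction z using OnePoint.rec with
  | infty => simp [smul_infty_eq_ite, rhoMatrix]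
  | coe x =>
    rcases eq_or_ne x 0 with rfl | hx
    · simp [smul_some_eq_ite, rhoMatrix]
    · simp [sigmaP_coe hx, smul_some_eq_ite, rhoMatrix, hx]
      field_simp
      ring

lemma rhoP_pow_apply (q n : ℕ) (z : RInf) : (rhoP q ^ n) z = (rhoMatrix q ^ n) • z := by
  rw [rhoP_eq_toPerm, ← MulAction.toPermHom_apply, ← map_pow]
  rfl

lemma rhoP_pow_self {q : ℕ} (hq : 2 ≤ q) : rhoP q ^ q = 1 := by
  ext z
  rw [rhoP_pow_apply, rhoMatrix_pow_self hq, neg_one_smul_onePoint]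
  rfl

lemma rhoP_pow_sub_one {q : ℕ} (hq : 2 ≤ q) : rhoP q ^ (q - 1) = sigmaP * (tauP q)⁻¹ := by
  rw [← rhoP_mul_sigmaP, mul_inv_rev, mul_inv_cancel_left, eq_inv_iff_mul_eq_one, ← pow_succ,
    Nat.sub_add_cancel (by omega), rhoP_pow_self hq]

lemma tauP_inv {q : ℕ} (hq : 2 ≤ q) : (tauP q)⁻¹ = sigmaP * rhoP q ^ (q - 1) := by
  rw [rhoP_pow_sub_one hq, ← mul_assoc, sigmaP_mul_self, one_mul]

lemma rhoP_pow_apply_zero (q : ℕ) {a : ℕ} (ha : 1 ≤ a) :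
    (rhoP q ^ a) ((0 : ℝ) : RInf) = (rhoP q ^ (a - 1)) ∞ := by
  rw [← Nat.sub_add_cancel ha, pow_succ, Equiv.Perm.mul_apply, rhoP_zero, Nat.add_sub_cancel]

def posReals : Set RInf := (↑) '' Ioi (0 : ℝ)

def negReals : Set RInf := (↑) '' Iio (0 : ℝ)

lemma infty_notMem_posReals : ∞ ∉ posReals := by
  rintro ⟨x, -, hx⟩
  exact OnePoint.coe_ne_infty x hx

lemma infty_notMem_negReals : ∞ ∉ negReals := by
  rintro ⟨x, -, hx⟩
  exact OnePoint.coe_ne_infty x hx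

lemma sigmaP_mapsTo_posReals : MapsTo sigmaP posReals negReals := by
  rintro _ ⟨x, hx, rfl⟩
  exact ⟨-x⁻¹, by simpa using hx, (sigmaP_coe (ne_of_gt hx)).symm⟩

lemma rhoP_pow_mapsTo_negReals {q a : ℕ} (ha₀ : 1 ≤ a) (ha : a < q) :
    MapsTo (rhoP q ^ a) negReals posReals := by
  rintro _ ⟨x, hx : x < 0, rfl⟩
  have hu₀ : 0 ≤ chebU q a := chebU_nonneg (by omega) (by omega) (by omega)
  have hu₁ : 0 < chebU q (a - 1) := chebU_pos (by omega) (by omega)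
  have hu₂ : 0 ≤ chebU q (a - 2) := chebU_nonneg (by omega) (by omega) (by omega)
  have hden : chebU q (a - 1) * x - chebU q (a - 2) < 0 := by nlinarith
  have hnum : chebU q a * x - chebU q (a - 1) < 0 := by nlinarith
  refine ⟨_, div_pos_of_neg_of_neg hnum hden, ?_⟩
  rw [rhoP_pow_apply, smul_some_eq_ite, rhoMatrix_pow]
  simp [← sub_eq_add_neg, hden.ne]

lemma rhoP_pow_infty_mem_posReals {q a : ℕ} (ha₀ : 1 ≤ a) (ha : a + 2 ≤ q) :
    (rhoP q ^ a) ∞ ∈ posReals := by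
  have hu₀ : 0 < chebU q a := chebU_pos (by omega) (by omega)
  have hu₁ : 0 < chebU q (a - 1) := chebU_pos (by omega) (by omega)
  refine ⟨_, div_pos hu₀ hu₁, ?_⟩
  rw [rhoP_pow_apply, smul_infty_eq_ite, rhoMatrix_pow]
  simp [hu₁.ne']

/-- Reduced words in `σ` and the `ρ^a`, `0 < a < q`, that are empty or begin with `σ`. -/
inductive IsSigmaWord (q : ℕ) : Equiv.Perm RInf → Prop
  | one : IsSigmaWord q 1
  | sigma : IsSigmaWord q sigmaP
  | cons {g : Equiv.Perm RInf} (a : ℕ) (ha₀ : 1 ≤ a) (ha : a < q) :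
      IsSigmaWord q g → IsSigmaWord q (sigmaP * rhoP q ^ a * g)

lemma IsSigmaWord.trichotomy {q : ℕ} (hq : 3 ≤ q) {h : Equiv.Perm RInf}
    (hh : IsSigmaWord q h) :
    (∃ k : ℤ, h = tauP q ^ k) ∨ (∃ k : ℤ, h = sigmaP * tauP q ^ k) ∨ h ∞ ∈ negReals := by
  induction hh with
  | one => exact Or.inl ⟨0, rfl⟩
  | sigma => exact Or.inr (Or.inl ⟨0, (mul_one _).symm⟩)
  | cons a ha₀ ha _ ih =>
    simp only [Equiv.Perm.mul_apply]
    rcases ih with ⟨k, rfl⟩ | ⟨k, rfl⟩ | hneg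
    · rcases (by omega : a + 2 ≤ q ∨ a = q - 1) with ha' | rfl
      · rw [tauP_zpow_apply_infty]
        exact Or.inr (Or.inr (sigmaP_mapsTo_posReals (rhoP_pow_infty_mem_posReals ha₀ ha')))
      · refine Or.inl ⟨k - 1, ?_⟩
        rw [rhoP_pow_sub_one (by omega), ← mul_assoc, sigmaP_mul_self, one_mul, zpow_sub_one]
        group
    · rcases (by omega : a = 1 ∨ 2 ≤ a) with rfl | ha'
      · refine Or.inr (Or.inl ⟨k + 1, ?_⟩)
        rw [pow_one, mul_assoc, ← mul_assoc (rhoP q), rhoP_mul_sigmaP, add_comm, zpow_one_add]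
      · rw [Equiv.Perm.mul_apply, tauP_zpow_apply_infty, sigmaP_infty, rhoP_pow_apply_zero q ha₀]
        refine Or.inr (Or.inr (sigmaP_mapsTo_posReals ?_))
        exact rhoP_pow_infty_mem_posReals (by omega) (by omega)
    · exact Or.inr (Or.inr (sigmaP_mapsTo_posReals (rhoP_pow_mapsTo_negReals ha₀ ha hneg)))

lemma exists_rhoP_pow_mul_isSigmaWord {q : ℕ} (hq : 2 ≤ q) {g : Equiv.Perm RInf}
    (hg : g ∈ Gq q) : ∃ a < q, ∃ h, IsSigmaWord q h ∧ g = rhoP q ^ a * h := by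
  let P (g : Equiv.Perm RInf) : Prop := ∃ a < q, ∃ h, IsSigmaWord q h ∧ g = rhoP q ^ a * h
  have rho_mul {g} : P g → P (rhoP q * g) := by
    rintro ⟨a, ha, h, hh, rfl⟩
    rcases (by omega : a + 1 < q ∨ a + 1 = q) with ha' | ha'
    · exact ⟨a + 1, ha', h, hh, by rw [pow_succ', mul_assoc]⟩
    · refine ⟨0, by omega, h, hh, ?_⟩
      rw [← mul_assoc, ← pow_succ', ha', rhoP_pow_self hq, pow_zero]
  have rho_pow_mul (n : ℕ) {g} (hg : P g) : P (rhoP q ^ n * g) := by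
    induction n with
    | zero => rwa [pow_zero, one_mul]
    | succ n ih => rw [pow_succ', mul_assoc]; exact rho_mul ih
  have sigma_mul {g} : P g → P (sigmaP * g) := by
    rintro ⟨a, ha, h, hh, rfl⟩
    rcases Nat.eq_zero_or_pos a with rfl | ha₀
    · rw [pow_zero, one_mul]
      cases hh with
      | one => exact ⟨0, by omega, sigmaP, .sigma, by rw [pow_zero, one_mul, mul_one]⟩
      | sigma => exact ⟨0, by omega, 1, .one, by rw [sigmaP_mul_self, pow_zero, one_mul]⟩
      | cons b _ hb hh' =>
        exact ⟨b, hb, _, hh', by rw [← mul_assoc, ← mul_assoc, sigmaP_mul_self, one_mul]⟩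
    · exact ⟨0, by omega, _, .cons a ha₀ ha hh, by rw [pow_zero, one_mul, mul_assoc]⟩
  refine Subgroup.closure_induction_left ⟨0, by omega, 1, .one, by simp⟩ ?_ ?_ hg
  · rintro x (rfl | rfl) y - hy
    · exact sigma_mul hy
    · rw [← rhoP_mul_sigmaP, mul_assoc]
      exact rho_mul (sigma_mul hy)
  · rintro x (rfl | rfl) y - hy
    · rw [sigmaP_inv]
      exact sigma_mul hy
    · rw [tauP_inv hq, mul_assoc]
      exact sigma_mul (rho_pow_mul _ hy)

lemma eq_tauP_zpow_of_apply_infty {q : ℕ} (hq : 3 ≤ q) {g : Equiv.Perm RInf}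
    (hg : g ∈ Gq q) (hfix : g ∞ = ∞) : ∃ k : ℤ, g = tauP q ^ k := by
  obtain ⟨a, ha, h, hh, rfl⟩ := exists_rhoP_pow_mul_isSigmaWord (by omega) hg
  rw [Equiv.Perm.mul_apply] at hfix
  rcases hh.trichotomy hq with ⟨k, rfl⟩ | ⟨k, rfl⟩ | hneg
  · rw [tauP_zpow_apply_infty] at hfix
    rcases (by omega : a = 0 ∨ (1 ≤ a ∧ a + 2 ≤ q) ∨ a = q - 1) with rfl | ⟨ha₀, ha'⟩ | rfl
    · exact ⟨k, by rw [pow_zero, one_mul]⟩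
    · exact absurd (hfix ▸ rhoP_pow_infty_mem_posReals ha₀ ha') infty_notMem_posReals
    · rw [rhoP_pow_sub_one (by omega), Equiv.Perm.mul_apply, ← zpow_neg_one,
        tauP_zpow_apply_infty, sigmaP_infty] at hfix
      exact absurd hfix (OnePoint.coe_ne_infty 0)
  · rw [Equiv.Perm.mul_apply, tauP_zpow_apply_infty, sigmaP_infty] at hfix
    rcases (by omega : a = 0 ∨ a = 1 ∨ 2 ≤ a) with rfl | rfl | ha'
    · exact absurd hfix (OnePoint.coe_ne_infty 0)
    · refine ⟨k + 1, ?_⟩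
      rw [pow_one, ← mul_assoc, rhoP_mul_sigmaP, add_comm, zpow_one_add]
    · rw [rhoP_pow_apply_zero q (by omega)] at hfix
      have := rhoP_pow_infty_mem_posReals (q := q) (a := a - 1) (by omega) (by omega)
      exact absurd (hfix ▸ this) infty_notMem_posReals
  · rcases Nat.eq_zero_or_pos a with rfl | ha₀
    · exact absurd (hfix ▸ hneg) infty_notMem_negReals
    · exact absurd (hfix ▸ rhoP_pow_mapsTo_negReals ha₀ ha hneg) infty_notMem_posReals

noncomputable def rosenMap (q : ℕ) (b : ℤ) : Equiv.Perm RInf := tauP q ^ b * sigmaP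

lemma rosenMap_mem (q : ℕ) (b : ℤ) : rosenMap q b ∈ Gq q :=
  mul_mem (zpow_mem (tauP_mem q) b) (sigmaP_mem q)

@[simp] lemma rosenMap_apply_zero (q : ℕ) (b : ℤ) : rosenMap q b ((0 : ℝ) : RInf) = ∞ := by
  simp [rosenMap, tauP_zpow_apply_infty]

@[simp] lemma rosenMap_apply_infty (q : ℕ) (b : ℤ) :
    rosenMap q b ∞ = ((b * lamq q : ℝ) : RInf) := by
  simp [rosenMap, tauP_zpow_apply_coe]

lemma Tq_eq_rosenMap (q : ℕ) (b : ℤ) : Tq q b = rosenMap q b := by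
  funext z
  induction z using OnePoint.rec with
  | infty => exact (rosenMap_apply_infty q b).symm
  | coe x =>
    rcases eq_or_ne x 0 with rfl | hx
    · simp [Tq]
    · simp [Tq, hx, rosenMap, sigmaP_coe hx, tauP_zpow_apply_coe]
      ring_nf

lemma rosenValue_eq_prod (q : ℕ) (bs : List ℤ) :
    RosenValue q bs = (bs.map (rosenMap q)).prod ∞ := by
  induction bs with
  | nil => rfl
  | cons b bs ih =>
    show Tq q b (RosenValue q bs) = _
    rw [ih, Tq_eq_rosenMap, List.map_cons, List.prod_cons, Equiv.Perm.mul_apply]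

lemma FareyAdj.apply {q : ℕ} {g : Equiv.Perm RInf} (hg : g ∈ Gq q) {u v : RInf}
    (h : FareyAdj q u v) : FareyAdj q (g u) (g v) := by
  obtain ⟨huv, f, hf, hfuv⟩ := h
  refine ⟨g.injective.ne huv, g * f, mul_mem hg hf, ?_⟩
  simp only [Equiv.Perm.mul_apply]
  rcases hfuv with ⟨hu, hv⟩ | ⟨hu, hv⟩
  · exact Or.inl ⟨hu ▸ rfl, hv ▸ rfl⟩
  · exact Or.inr ⟨hu ▸ rfl, hv ▸ rfl⟩

lemma fareyAdj_apply_zero_apply_infty {q : ℕ} {g : Equiv.Perm RInf} (hg : g ∈ Gq q) :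
    FareyAdj q (g ((0 : ℝ) : RInf)) (g ∞) :=
  ⟨g.injective.ne (OnePoint.coe_ne_infty 0), g, hg, Or.inl ⟨rfl, rfl⟩⟩

lemma fareyAdj_infty_iff {q : ℕ} (hq : 3 ≤ q) {v : RInf} :
    FareyAdj q ∞ v ↔ ∃ b : ℤ, v = rosenMap q b ∞ := by
  constructor
  · rintro ⟨-, g, hg, ⟨h0, rfl⟩ | ⟨rfl, hfix⟩⟩
    · obtain ⟨k, hk⟩ := eq_tauP_zpow_of_apply_infty hq (mul_mem hg (sigmaP_mem q))
        (by rwa [Equiv.Perm.mul_apply, sigmaP_infty])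
      exact ⟨k, by rw [rosenMap, ← hk, mul_assoc, sigmaP_mul_self, mul_one]⟩
    · obtain ⟨k, rfl⟩ := eq_tauP_zpow_of_apply_infty hq hg hfix
      exact ⟨k, rfl⟩
  · rintro ⟨b, rfl⟩
    simpa using fareyAdj_apply_zero_apply_infty (rosenMap_mem q b)

lemma fareyAdj_apply_infty_iff {q : ℕ} (hq : 3 ≤ q) {g : Equiv.Perm RInf} (hg : g ∈ Gq q)
    {v : RInf} : FareyAdj q (g ∞) v ↔ ∃ b : ℤ, v = (g * rosenMap q b) ∞ := by
  constructor
  · intro h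
    obtain ⟨b, hb⟩ := (fareyAdj_infty_iff hq).mp (by simpa using h.apply (inv_mem hg))
    exact ⟨b, by rw [Equiv.Perm.mul_apply, ← hb, Equiv.apply_symm_apply]⟩
  · rintro ⟨b, rfl⟩
    simpa using fareyAdj_apply_zero_apply_infty (mul_mem hg (rosenMap_mem q b))

noncomputable def convergentsFrom (q : ℕ) : Equiv.Perm RInf → List ℤ → List RInf
  | _, [] => []
  | g, b :: bs => (g * rosenMap q b) ∞ :: convergentsFrom q (g * rosenMap q b) bs

lemma isChain_fareyAdj_iff {q : ℕ} (hq : 3 ≤ q) {g : Equiv.Perm RInf} (hg : g ∈ Gq q)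
    (vs : List RInf) :
    (g ∞ :: vs).IsChain (FareyAdj q) ↔ ∃ bs, convergentsFrom q g bs = vs := by
  induction vs generalizing g with
  | nil => exact ⟨fun _ => ⟨[], rfl⟩, fun _ => List.isChain_singleton _⟩
  | cons v vs ih =>
    rw [List.isChain_cons_cons, fareyAdj_apply_infty_iff hq hg]
    constructor
    · rintro ⟨⟨b, rfl⟩, hvs⟩
      obtain ⟨bs, rfl⟩ := (ih (mul_mem hg (rosenMap_mem q b))).mp hvs
      exact ⟨b :: bs, rfl⟩
    · rintro ⟨_ | ⟨b, bs⟩, h⟩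
      · cases h
      · obtain ⟨rfl, rfl⟩ := List.cons_eq_cons.mp h
        exact ⟨⟨b, rfl⟩, (ih (mul_mem hg (rosenMap_mem q b))).mpr ⟨bs, rfl⟩⟩

lemma convergentsFrom_injective {q : ℕ} (hq : 3 ≤ q) (g : Equiv.Perm RInf) :
    Function.Injective (convergentsFrom q g) := by
  intro bs cs h
  induction bs generalizing g cs with
  | nil => cases cs <;> simp_all [convergentsFrom]
  | cons b bs ih =>
    cases cs with
    | nil => simp [convergentsFrom] at h
    | cons c cs =>
      obtain ⟨hbc, h⟩ := List.cons_eq_cons.mp h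
      have hb : (b : ℝ) * lamq q = c * lamq q := by simpa using hbc
      obtain rfl : b = c := by exact_mod_cast mul_right_cancel₀ (lamq_pos hq).ne' hb
      rw [ih _ h]

lemma length_convergentsFrom (q : ℕ) (g : Equiv.Perm RInf) (bs : List ℤ) :
    (convergentsFrom q g bs).length = bs.length := by
  induction bs generalizing g with
  | nil => rfl
  | cons b bs ih => simp [convergentsFrom, ih]

lemma getElem_convergentsFrom (q : ℕ) (g : Equiv.Perm RInf) (bs : List ℤ) (m : ℕ)
    (hm : m < (convergentsFrom q g bs).length) :
    (convergentsFrom q g bs)[m] = (g * ((bs.take (m + 1)).map (rosenMap q)).prod) ∞ := by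
  induction bs generalizing g m with
  | nil => simp [convergentsFrom] at hm
  | cons b bs ih =>
    cases m with
    | zero => simp [convergentsFrom]
    | succ m => simp [convergentsFrom, ih, mul_assoc]

lemma convergentsFrom_one_eq_ofFn_iff (q : ℕ) {n : ℕ} (v : Fin n → RInf) (bs : List ℤ) :
    convergentsFrom q 1 bs = List.ofFn v ↔
      bs.length = n ∧ ∀ m : Fin n, RosenValue q (bs.take (m + 1)) = v m := by
  simp only [List.ext_getElem_iff, length_convergentsFrom, List.length_ofFn, List.getElem_ofFn,
    getElem_convergentsFrom, one_mul, ← rosenValue_eq_prod]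
  exact and_congr_right fun h => ⟨fun H m => H m (h ▸ m.2) m.2, fun H m _ hm => H ⟨m, hm⟩⟩

theorem stmt3_general (q : ℕ) (hq : 3 ≤ q) (n : ℕ) (v : Fin n → RInf) :
    ((∃ bs : List ℤ, bs.length = n ∧
        ∀ m : Fin n, RosenValue q (bs.take (m.val + 1)) = v m) ↔
      List.Chain' (FareyAdj q) ((∞ : RInf) :: List.ofFn v)) ∧
    ∀ bs cs : List ℤ, bs.length = n → cs.length = n →
      (∀ m : Fin n, RosenValue q (bs.take (m.val + 1)) = v m) →
      (∀ m : Fin n, RosenValue q (cs.take (m.val + 1)) = v m) → bs = cs := by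
  refine ⟨?_, fun bs cs hbs hcs hb hc => ?_⟩
  · simp only [← convergentsFrom_one_eq_ofFn_iff]
    exact (isChain_fareyAdj_iff hq (one_mem _) (List.ofFn v)).symm
  · apply convergentsFrom_injective hq 1
    rw [(convergentsFrom_one_eq_ofFn_iff q v bs).mpr ⟨hbs, hb⟩,
      (convergentsFrom_one_eq_ofFn_iff q v cs).mpr ⟨hcs, hc⟩]

/-- `v 0, …, v (n-1)` are the consecutive convergents of some Rosen
continued fraction if and only if `⟨∞, v 0, …, v (n-1)⟩` is a path in `𝓕_q`;
moreover the coefficients are then uniquely determined. -/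
theorem stmt3 (q : ℕ) (hq : 3 ≤ q) (n : ℕ) (hn : 1 ≤ n) (v : Fin n → RInf) :
    ((∃ bs : List ℤ, bs.length = n ∧
        ∀ m : Fin n, RosenValue q (bs.take (m.val + 1)) = v m) ↔
      List.Chain' (FareyAdj q) ((∞ : RInf) :: List.ofFn v)) ∧
    ∀ bs cs : List ℤ, bs.length = n → cs.length = n →
      (∀ m : Fin n, RosenValue q (bs.take (m.val + 1)) = v m) →
      (∀ m : Fin n, RosenValue q (cs.take (m.val + 1)) = v m) → bs = cs :=
  stmt3_general q hq n v
end

section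
/- Every vertex y ≠ ∞ of the graph 𝓕_∞ has exactly one geodesic Rosen continued fraction expansion; that is, there is exactly one tuple (b_1, …, b_n) of integers such that [b_1, …, b_n]_∞ is a geodesic Rosen continued fraction with value y. Furthermore, for any integers b_1, …, b_n (n ≥ 1), the continued fraction [b_1, …, b_n]_∞ is a geodesic Rosen continued fraction if and only if b_i ≠ 0 for i = 2, …, n. -/
open OnePoint

/-- `a/b` (in lowest terms, with exactly one of `a`, `b` even, and `1/0 = ∞`)
represents the point `v` of `ℝ∞`. -/
def InfReps (v : RInf) (a b : ℤ) : Prop :=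
  Int.gcd a b = 1 ∧ (Even a ↔ ¬ Even b) ∧
  ((b = 0 ∧ v = (∞ : RInf)) ∨ (b ≠ 0 ∧ v = (((a : ℝ) / (b : ℝ)) : RInf)))

/-- Vertices of the Farey graph `𝓕_∞` of the theta group. -/
def VertexInf (v : RInf) : Prop := ∃ a b : ℤ, InfReps v a b

/-- Adjacency in `𝓕_∞`: `|ad - bc| = 1`. -/
def AdjInf (u v : RInf) : Prop :=
  u ≠ v ∧ ∃ a b c d : ℤ, InfReps u a b ∧ InfReps v c d ∧
    (a * d - b * c = 1 ∨ a * d - b * c = -1)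

/-- The Möbius map `z ↦ 2b - 1/z`. -/
noncomputable def TInf (b : ℤ) : RInf → RInf := fun z =>
  match z with
  | Option.none => ((2 * b : ℝ) : RInf)
  | Option.some x => if x = 0 then (∞ : RInf) else ((2 * b - x⁻¹ : ℝ) : RInf)

/-- The value of the continued fraction `[b_1, …, b_n]_∞`. -/
noncomputable def RosenValueInf (bs : List ℤ) : RInf := bs.foldr TInf ∞

/-- Geodesic continued fractions with even integer coefficients. -/
def IsGeodesicRosenInf (bs : List ℤ) : Prop :=
  bs ≠ [] ∧ RosenValueInf bs ≠ ∞ ∧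
  ∀ cs : List ℤ, cs ≠ [] → RosenValueInf cs = RosenValueInf bs → bs.length ≤ cs.length

/-! A coefficient `b_i = 0` with `i ≥ 2` can be deleted together with `b_{i+1}`, replacing
`b_{i-1}` by `b_{i-1} + b_{i+1}` (or together with `b_{i-1}` when `i = n`), because
`T_a ∘ T_0 ∘ T_d = T_{a+d}` and `T_a (T_0 ∞) = ∞`; so geodesic expansions have
`b_2, …, b_n ≠ 0`. Conversely, the value of such an expansion lies strictly within distance `1`
of `2 b_1`, so it determines `b_1` and, `T_{b_1}` being injective, the rest. Every other
expansion of the same value shrinks to this one by deleting zeros, so it is geodesic. Existence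
is a Euclidean algorithm with even quotients, `a/b = 2q + r/b` with `0 < |r| < |b|`. -/

@[simp] lemma RosenValueInf_nil : RosenValueInf [] = ∞ := rfl

@[simp] lemma RosenValueInf_cons (b : ℤ) (bs : List ℤ) :
    RosenValueInf (b :: bs) = TInf b (RosenValueInf bs) := rfl

@[simp] lemma TInf_infty (b : ℤ) : TInf b ∞ = ((2 * b : ℝ) : RInf) := rfl

@[simp] lemma TInf_coe_zero (b : ℤ) : TInf b ((0 : ℝ) : RInf) = ∞ := by
  simp [TInf]

lemma TInf_coe_of_ne_zero (b : ℤ) {x : ℝ} (hx : x ≠ 0) :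
    TInf b (x : RInf) = ((2 * b - x⁻¹ : ℝ) : RInf) := by
  simp [TInf, hx]

lemma TInf_eq_map_sigmaFun (b : ℤ) (z : RInf) :
    TInf b z = (sigmaFun z).map (· + 2 * (b : ℝ)) := by
  cases z with
  | none => simp [TInf, sigmaFun]
  | some x =>
    by_cases hx : x = 0
    · simp [TInf, sigmaFun, hx]
    · simp [TInf, sigmaFun, hx, sub_eq_neg_add]

lemma TInf_injective (b : ℤ) : Function.Injective (TInf b) := by
  have hmap : Function.Injective (OnePoint.map (· + 2 * (b : ℝ))) :=
    Option.map_injective (add_left_injective _)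
  intro z w h
  simp only [TInf_eq_map_sigmaFun] at h
  exact Function.Involutive.injective sigmaFun_invol (hmap h)

lemma TInf_zero (z : RInf) : TInf 0 z = sigmaFun z := by
  rw [TInf_eq_map_sigmaFun]
  simp [OnePoint.map, id]

lemma TInf_TInf_zero_TInf (a d : ℤ) (z : RInf) :
    TInf a (TInf 0 (TInf d z)) = TInf (a + d) z := by
  rw [TInf_eq_map_sigmaFun a, TInf_zero, sigmaFun_invol, TInf_eq_map_sigmaFun d,
    TInf_eq_map_sigmaFun]
  induction sigmaFun z using OnePoint.rec with
  | infty => rfl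
  | coe x =>
    simp only [OnePoint.map_some, Int.cast_add]
    ring_nf

lemma exists_RosenValueInf_cons_eq_coe (b : ℤ) {bs : List ℤ} (hbs : 0 ∉ bs) :
    ∃ x : ℝ, RosenValueInf (b :: bs) = x ∧ |x - 2 * b| < 1 ∧ (x = 2 * b ↔ bs = []) := by
  induction bs generalizing b with
  | nil => exact ⟨2 * b, rfl, by simp, by simp⟩
  | cons c bs ih =>
    obtain ⟨hc, hbs⟩ : c ≠ 0 ∧ 0 ∉ bs := by simpa [eq_comm] using hbs
    obtain ⟨y, hy, hyc, -⟩ := ih c hbs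
    have hy1 : 1 < |y| := by
      have hc1 : (1 : ℝ) ≤ |(c : ℝ)| := by exact_mod_cast Int.one_le_abs hc
      have := abs_sub_abs_le_abs_sub (2 * (c : ℝ)) y
      rw [abs_sub_comm, abs_mul, abs_two] at this
      linarith
    have hy0 : y ≠ 0 := by rintro rfl; norm_num at hy1
    refine ⟨2 * b - y⁻¹, by rw [RosenValueInf_cons, hy, TInf_coe_of_ne_zero b hy0], ?_, ?_⟩
    · rw [sub_sub_cancel_left, abs_neg, abs_inv]
      exact inv_lt_one_of_one_lt₀ hy1
    · simp [hy0]

lemma RosenValueInf_cons_ne_infty (b : ℤ) {bs : List ℤ} (hbs : 0 ∉ bs) :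
    RosenValueInf (b :: bs) ≠ ∞ := by
  obtain ⟨x, hx, -⟩ := exists_RosenValueInf_cons_eq_coe b hbs
  rw [hx]
  exact OnePoint.coe_ne_infty x

lemma eq_of_abs_sub_two_mul_lt_one {x : ℝ} {b c : ℤ} (hb : |x - 2 * b| < 1)
    (hc : |x - 2 * c| < 1) : b = c := by
  rw [abs_lt] at hb hc
  have h₁ : b < c + 1 := by exact_mod_cast (by linarith : (b : ℝ) < c + 1)
  have h₂ : c < b + 1 := by exact_mod_cast (by linarith : (c : ℝ) < b + 1)
  omega

lemma eq_and_nil_iff_of_RosenValueInf_cons_eq {b c : ℤ} {bs cs : List ℤ} (hbs : 0 ∉ bs)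
    (hcs : 0 ∉ cs) (h : RosenValueInf (b :: bs) = RosenValueInf (c :: cs)) :
    b = c ∧ (bs = [] ↔ cs = []) := by
  obtain ⟨x, hx, hxb, hxbs⟩ := exists_RosenValueInf_cons_eq_coe b hbs
  obtain ⟨y, hy, hyc, hycs⟩ := exists_RosenValueInf_cons_eq_coe c hcs
  obtain rfl : x = y := OnePoint.coe_injective (hx.symm.trans (h.trans hy))
  obtain rfl := eq_of_abs_sub_two_mul_lt_one hxb hyc
  exact ⟨rfl, hxbs.symm.trans hycs⟩

lemma eq_of_RosenValueInf_cons_eq {b c : ℤ} {bs cs : List ℤ} (hbs : 0 ∉ bs) (hcs : 0 ∉ cs)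
    (h : RosenValueInf (b :: bs) = RosenValueInf (c :: cs)) : b :: bs = c :: cs := by
  induction bs generalizing b c cs with
  | nil =>
    obtain ⟨rfl, hnil⟩ := eq_and_nil_iff_of_RosenValueInf_cons_eq hbs hcs h
    rw [hnil.1 rfl]
  | cons _ bs ih =>
    obtain ⟨rfl, hnil⟩ := eq_and_nil_iff_of_RosenValueInf_cons_eq hbs hcs h
    obtain ⟨c', cs, rfl⟩ := List.exists_cons_of_ne_nil (mt hnil.2 (List.cons_ne_nil _ _))
    rw [ih (List.not_mem_of_not_mem_cons hbs) (List.not_mem_of_not_mem_cons hcs)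
      (TInf_injective b h)]

lemma exists_RosenValueInf_eq_of_zero_mem_tail {cs : List ℤ} (h : 0 ∈ cs.tail) :
    ∃ cs' : List ℤ, cs'.length + 2 = cs.length ∧ RosenValueInf cs' = RosenValueInf cs := by
  induction cs with
  | nil => simp at h
  | cons a cs ih =>
    rcases cs with _ | ⟨c, rest⟩
    · simp at h
    obtain rfl | hc := eq_or_ne c 0
    · rcases rest with _ | ⟨d, rest⟩
      · exact ⟨[], rfl, by simp⟩
      · exact ⟨(a + d) :: rest, by simp, (TInf_TInf_zero_TInf a d _).symm⟩
    · obtain ⟨cs', hlen, hval⟩ := ih (by simpa [Ne.symm hc] using h)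
      exact ⟨a :: cs', by simp [← hlen], by simp [hval]⟩

lemma length_le_of_RosenValueInf_eq {b : ℤ} {bs : List ℤ} (hbs : 0 ∉ bs) (cs : List ℤ)
    (hcs : cs ≠ []) (h : RosenValueInf cs = RosenValueInf (b :: bs)) :
    (b :: bs).length ≤ cs.length := by
  by_cases h0 : 0 ∈ cs.tail
  · obtain ⟨cs', hlen, hval⟩ := exists_RosenValueInf_eq_of_zero_mem_tail h0
    have hcs' : cs' ≠ [] := by
      rintro rfl
      exact RosenValueInf_cons_ne_infty b hbs (h ▸ hval).symm
    have := length_le_of_RosenValueInf_eq hbs cs' hcs' (hval.trans h)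
    omega
  · obtain ⟨c, cs, rfl⟩ := List.exists_cons_of_ne_nil hcs
    exact (congrArg List.length (eq_of_RosenValueInf_cons_eq hbs h0 h.symm)).le
termination_by cs.length

theorem isGeodesicRosenInf_cons_iff (b : ℤ) (bs : List ℤ) :
    IsGeodesicRosenInf (b :: bs) ↔ 0 ∉ bs := by
  refine ⟨fun ⟨_, hne, hmin⟩ h0 => ?_, fun hbs => ?_⟩
  · obtain ⟨cs, hlen, hval⟩ := exists_RosenValueInf_eq_of_zero_mem_tail (cs := b :: bs) h0
    have hcs : cs ≠ [] := by
      rintro rfl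
      exact hne hval.symm
    have := hmin cs hcs hval
    omega
  · exact ⟨List.cons_ne_nil _ _, RosenValueInf_cons_ne_infty b hbs,
      length_le_of_RosenValueInf_eq hbs⟩

/-- Take the balanced remainder modulo `2|b|`; it is neither `0` nor `-|b|` because `b ∤ a`. -/
lemma exists_eq_two_mul_mul_add {a b : ℤ} (hab : IsCoprime a b) (hb : 2 ≤ b.natAbs) :
    ∃ q r : ℤ, a = 2 * b * q + r ∧ r ≠ 0 ∧ r.natAbs < b.natAbs := by
  set m := 2 * b.natAbs
  have hdiv := Int.bdiv_add_bmod a m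
  have hlo := Int.le_bmod (x := a) (m := m) (by omega)
  have hhi := Int.bmod_le (x := a) (m := m) (by omega)
  have hq : a = 2 * b * (b.sign * a.bdiv m) + a.bmod m := by
    simp only [m, Nat.cast_mul, Nat.cast_ofNat] at hdiv
    linear_combination hdiv.symm - 2 * a.bdiv m * Int.sign_mul_self b
  have hndvd : ¬ b ∣ a.bmod m := fun hd => by
    have hba : b ∣ a := hq ▸ (dvd_mul_of_dvd_left (dvd_mul_left b 2) _).add hd
    have := Int.isUnit_iff_natAbs_eq.1 (hab.isUnit_of_dvd' hba dvd_rfl)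
    omega
  have hr0 : a.bmod m ≠ 0 := fun h => hndvd (h ▸ dvd_zero b)
  have hrb : a.bmod m ≠ -b.natAbs := fun h => hndvd (h ▸ (Int.dvd_natAbs.2 dvd_rfl).neg_right)
  refine ⟨_, _, hq, hr0, ?_⟩
  omega

/-- Peel off `a/b = 2q + r/b = T_q(-b/r)` and recurse on `-b/r`, whose expansion cannot start
with `0` because `|-b/r| > 1`. -/
lemma exists_RosenValueInf_eq_div {a b : ℤ} (hb : b ≠ 0) (hab : IsCoprime a b)
    (hpar : Even a ↔ ¬ Even b) :
    ∃ c cs, 0 ∉ cs ∧ RosenValueInf (c :: cs) = ((a / b : ℝ) : RInf) := by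
  induction hn : b.natAbs using Nat.strong_induction_on generalizing a b with
  | _ n ih =>
  subst hn
  obtain hb1 | hb2 : b.natAbs = 1 ∨ 2 ≤ b.natAbs := by omega
  · obtain ⟨k, rfl⟩ := hpar.2 (Int.not_even_iff_odd.2 (Int.natAbs_odd.1 (hb1 ▸ odd_one)))
    refine ⟨k * b, [], List.not_mem_nil, ?_⟩
    obtain rfl | rfl : b = 1 ∨ b = -1 := by omega
    all_goals norm_num; ring
  · obtain ⟨q, r, rfl, hr, hrb⟩ := exists_eq_two_mul_mul_add hab hb2
    have hab' : IsCoprime (-b) r :=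
      (show IsCoprime (r + b * (2 * q)) b by convert hab using 1; ring).of_add_mul_left_left
        |>.symm.neg_left
    have hpar' : Even (-b) ↔ ¬ Even r := by
      simp only [Int.even_add, even_two, Even.mul_right, true_iff, Int.not_even_iff_odd] at hpar
      rw [even_neg, hpar, Int.not_odd_iff_even]
    obtain ⟨c, cs, hcs, hval⟩ := ih _ hrb hr hab' hpar' rfl
    obtain ⟨x, hx, hxc, -⟩ := exists_RosenValueInf_cons_eq_coe c hcs
    have hxv : x = -b / r := by exact_mod_cast OnePoint.coe_injective (hx.symm.trans hval)
    have hx1 : 1 < |x| := by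
      have hrb' : |r| < |b| := by rw [Int.abs_eq_natAbs, Int.abs_eq_natAbs]; exact_mod_cast hrb
      rw [hxv, abs_div, abs_neg, one_lt_div (by positivity)]
      exact_mod_cast hrb'
    have hc : c ≠ 0 := by
      rintro rfl
      norm_num at hxc
      linarith
    have hx0 : x ≠ 0 := by rintro rfl; norm_num at hx1
    refine ⟨q, c :: cs, by simp [Ne.symm hc, hcs], ?_⟩
    rw [RosenValueInf_cons, hx, TInf_coe_of_ne_zero q hx0, hxv]
    congr 1
    field_simp
    push_cast
    ring

/-- every vertex of `𝓕_∞` other than `∞` has a unique geodesic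
Rosen continued fraction expansion; and `[b_1, …, b_n]_∞` is geodesic exactly
when `b_2, …, b_n` are all nonzero. -/
theorem stmt12 :
    (∀ y : RInf, VertexInf y → y ≠ (∞ : RInf) →
      ∃! bs : List ℤ, IsGeodesicRosenInf bs ∧ RosenValueInf bs = y) ∧
    (∀ bs : List ℤ, bs ≠ [] →
      (IsGeodesicRosenInf bs ↔ ∀ x ∈ bs.tail, x ≠ 0)) := by
  refine ⟨fun y ⟨a, b, hab, hpar, hy⟩ hy_ne => ?_, ?_⟩
  · obtain ⟨-, rfl⟩ | ⟨hb, rfl⟩ := hy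
    · exact absurd rfl hy_ne
    obtain ⟨c, cs, hcs, hval⟩ :=
      exists_RosenValueInf_eq_div hb (Int.isCoprime_iff_gcd_eq_one.2 hab) hpar
    refine ⟨c :: cs, ⟨(isGeodesicRosenInf_cons_iff c cs).2 hcs, hval⟩, ?_⟩
    rintro (_ | ⟨d, ds⟩) ⟨hgeod, hds⟩
    · exact absurd rfl hgeod.1
    · exact eq_of_RosenValueInf_cons_eq ((isGeodesicRosenInf_cons_iff d ds).1 hgeod) hcs
        (hds.trans hval.symm)
  · rintro (_ | ⟨b, bs⟩) hbs
    · exact absurd rfl hbs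
    · rw [isGeodesicRosenInf_cons_iff, List.tail_cons, List.forall_mem_ne']
end
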